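/- For all real numbers a, b and every σ > 0, the total variation distance between the Gaussian measures N(a,σ²) and N(b,σ²) equals erf(|a−b|/(2√2·σ)), where the total variation distance between probability measures μ and ν on ℝ is sup_{A measurable} |μ(A) − ν(A)|. -/

import Mathlib

open MeasureTheory ProbabilityTheory

/-- `erf(x)`: the probability that a centered Gaussian of variance `1/2` lies in `[−x,x]`,
i.e. `(2/√π)∫₀ˣ e^{−u²} du`. -/
noncomputable def erf (x : ℝ) : ℝ := 2 / Real.sqrt Real.pi * ∫ u in (0 : ℝ)..x, Real.exp (-u ^ 2)

/-!
For two measures of equal mass, a measurable set `S` with `μ ≥ ν` on `S` and `ν ≥ μ` off `S`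
(a Hahn set of `μ - ν`) maximises `|μ A - ν A|`, the maximum being `μ S - ν S`. For
`N(a, v)` and `N(b, v)` with `b ≤ a`, the density with the nearer mean is the larger one, so
`S = (m, ∞)` with `m = (a + b) / 2`. By translation invariance `N(b, v)(S)` is the
`N(a, v)`-mass of `(a + d, ∞)`, `d = (a - b) / 2`, so the distance is the `N(a, v)`-mass of
`(a - d, a + d]`, which the substitution `u = (x - a) / √(2v)` turns into `erf (d / √(2v))`.
-/

open Set Real
open scoped NNReal

section TotalVariation

variable {α : Type*} [MeasurableSpace α] {μ ν : Measure α} {S A : Set α}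

lemma measureReal_le_of_restrict_le [IsFiniteMeasure μ] (h : ν.restrict S ≤ μ.restrict S)
    {t : Set α} (ht : t ⊆ S) : ν.real t ≤ μ.real t := by
  have hνμ := h t
  rw [Measure.restrict_eq_self _ ht, Measure.restrict_eq_self _ ht] at hνμ
  exact ENNReal.toReal_mono (measure_ne_top _ _) hνμ

lemma measureReal_inter_sub_mem_Icc [IsFiniteMeasure μ] [IsFiniteMeasure ν]
    (hA : MeasurableSet A) (h : ν.restrict S ≤ μ.restrict S) :
    μ.real (S ∩ A) - ν.real (S ∩ A) ∈ Icc 0 (μ.real S - ν.real S) := by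
  have h₁ := measureReal_le_of_restrict_le h (inter_subset_left : S ∩ A ⊆ S)
  have h₂ := measureReal_le_of_restrict_le h (sdiff_subset : S \ A ⊆ S)
  have hμ := measureReal_inter_add_sdiff (μ := μ) (s := S) hA
  have hν := measureReal_inter_add_sdiff (μ := ν) (s := S) hA
  constructor <;> linarith

lemma measureReal_inter_add_compl_inter [IsFiniteMeasure μ] (hS : MeasurableSet S) (A : Set α) :
    μ.real (S ∩ A) + μ.real (Sᶜ ∩ A) = μ.real A := by
  rw [inter_comm S, inter_comm Sᶜ, ← sdiff_eq]
  exact measureReal_inter_add_sdiff hS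

theorem iSup_abs_measureReal_sub_eq [IsFiniteMeasure μ] [IsFiniteMeasure ν]
    (huniv : μ univ = ν univ) (hS : MeasurableSet S)
    (hνμ : ν.restrict S ≤ μ.restrict S) (hμν : μ.restrict Sᶜ ≤ ν.restrict Sᶜ) :
    ⨆ A : {A : Set α // MeasurableSet A}, |μ.real A - ν.real A| = μ.real S - ν.real S := by
  have hcompl : ν.real Sᶜ - μ.real Sᶜ = μ.real S - ν.real S := by
    have : μ.real univ = ν.real univ := congrArg ENNReal.toReal huniv
    rw [measureReal_compl hS, measureReal_compl hS]
    linarith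
  have bound (A : Set α) (hA : MeasurableSet A) : |μ.real A - ν.real A| ≤ μ.real S - ν.real S := by
    obtain ⟨h₁, h₂⟩ := measureReal_inter_sub_mem_Icc hA hνμ
    obtain ⟨h₃, h₄⟩ := measureReal_inter_sub_mem_Icc hA hμν
    rw [← measureReal_inter_add_compl_inter (μ := μ) hS A,
      ← measureReal_inter_add_compl_inter (μ := ν) hS A, abs_le]
    constructor <;> linarith
  have bound' (A : {A : Set α // MeasurableSet A}) := bound A A.2
  exact le_antisymm (ciSup_le bound')
    (le_ciSup_of_le ⟨_, forall_mem_range.2 bound'⟩ ⟨S, hS⟩ (le_abs_self _))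

end TotalVariation

section Gaussian

variable {a b : ℝ} {v : ℝ≥0}

lemma gaussianPDFReal_le_of_sq_le {x : ℝ} (h : (x - a) ^ 2 ≤ (x - b) ^ 2) :
    gaussianPDFReal b v x ≤ gaussianPDFReal a v x := by
  unfold gaussianPDFReal
  gcongr

lemma gaussianReal_restrict_le (hv : v ≠ 0) {S : Set ℝ} (hS : MeasurableSet S)
    (h : ∀ x ∈ S, (x - a) ^ 2 ≤ (x - b) ^ 2) :
    (gaussianReal b v).restrict S ≤ (gaussianReal a v).restrict S := by
  rw [gaussianReal_of_var_ne_zero _ hv, gaussianReal_of_var_ne_zero _ hv,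
    restrict_withDensity hS, restrict_withDensity hS]
  refine withDensity_mono ((ae_restrict_iff' hS).2 (ae_of_all _ fun x hx ↦ ?_))
  exact ENNReal.ofReal_le_ofReal (gaussianPDFReal_le_of_sq_le (h x hx))

lemma gaussianReal_real_Ioi (a b c : ℝ) (v : ℝ≥0) :
    (gaussianReal b v).real (Ioi c) = (gaussianReal a v).real (Ioi (c + (a - b))) := by
  conv_lhs => rw [← add_sub_cancel a b, ← gaussianReal_map_add_const]
  rw [map_measureReal_apply (measurable_add_const _) measurableSet_Ioi, preimage_add_const_Ioi]
  ring_nf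

lemma gaussianPDFReal_eq_exp_neg_sq (a : ℝ) (v : ℝ≥0) (x : ℝ) :
    gaussianPDFReal a v x = (√π * √(2 * v))⁻¹ * exp (-((x - a) / √(2 * v)) ^ 2) := by
  rw [gaussianPDFReal, div_pow, sq_sqrt (by positivity), ← sqrt_mul pi_pos.le, neg_div,
    mul_assoc]
  ring_nf

lemma sqrt_pi_mul_erf (c : ℝ) : √π * erf c = ∫ u in -c..c, exp (-u ^ 2) := by
  have hint (s t : ℝ) : IntervalIntegrable (fun u : ℝ ↦ exp (-u ^ 2)) volume s t :=
    (by fun_prop : Continuous fun u : ℝ ↦ exp (-u ^ 2)).intervalIntegrable s t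
  have heven : ∫ u in -c..0, exp (-u ^ 2) = ∫ u in 0..c, exp (-u ^ 2) := by
    convert (intervalIntegral.integral_comp_neg (fun u : ℝ ↦ exp (-u ^ 2)) (a := 0) (b := c)).symm
      using 2 <;> simp
  rw [← intervalIntegral.integral_add_adjacent_intervals (hint (-c) 0) (hint 0 c), heven, erf]
  field_simp
  ring

lemma gaussianReal_real_Ioc (a : ℝ) (hv : v ≠ 0) {d : ℝ} (hd : 0 ≤ d) :
    (gaussianReal a v).real (Ioc (a - d) (a + d)) = erf (d / √(2 * v)) := by
  have hs : 0 < √(2 * (v : ℝ)) := sqrt_pos.2 (by positivity)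
  have hshift : ∫ x in (a - d)..(a + d), exp (-((x - a) / √(2 * v)) ^ 2)
      = ∫ x in (-d)..d, exp (-(x / √(2 * v)) ^ 2) := by
    rw [intervalIntegral.integral_comp_sub_right (fun x ↦ exp (-(x / √(2 * v)) ^ 2))]
    ring_nf
  rw [measureReal_def, gaussianReal_apply_eq_integral _ hv,
    ENNReal.toReal_ofReal (integral_nonneg (gaussianPDFReal_nonneg a v)),
    ← intervalIntegral.integral_of_le (by linarith)]
  simp only [gaussianPDFReal_eq_exp_neg_sq]
  rw [intervalIntegral.integral_const_mul, hshift,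
    intervalIntegral.integral_comp_div (fun u ↦ exp (-u ^ 2)) hs.ne', neg_div, ← sqrt_pi_mul_erf,
    smul_eq_mul]
  field_simp

lemma iSup_abs_gaussianReal_sub_of_le (hv : v ≠ 0) (hba : b ≤ a) :
    ⨆ A : {A : Set ℝ // MeasurableSet A},
        |(gaussianReal a v).real A - (gaussianReal b v).real A|
      = erf ((a - b) / (2 * √(2 * v))) := by
  set m := (a + b) / 2
  have hm : m = a - (a - b) / 2 := by ring
  have hm' : m + (a - b) = a + (a - b) / 2 := by ring
  rw [iSup_abs_measureReal_sub_eq (S := Ioi m) (by simp) measurableSet_Ioi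
    (gaussianReal_restrict_le hv measurableSet_Ioi fun x hx ↦ ?_)
    (gaussianReal_restrict_le hv measurableSet_Ioi.compl fun x hx ↦ ?_),
    gaussianReal_real_Ioi a b m v, hm', ← measureReal_sdiff (Ioi_subset_Ioi (by linarith))
    measurableSet_Ioi, hm, Ioi_sdiff_Ioi, gaussianReal_real_Ioc a hv (by linarith)]
  · rw [div_div]
  · nlinarith [mul_nonneg (sub_nonneg.2 hba) (sub_nonneg.2 (mem_Ioi.1 hx).le)]
  · nlinarith [mul_nonneg (sub_nonneg.2 hba) (sub_nonneg.2 (not_lt.1 hx))]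

end Gaussian

/-- The total-variation distance between `N(a,σ²)` and `N(b,σ²)` equals `erf(|a−b|/(2√2σ))`,
where the total-variation distance is the supremum over measurable sets `A` of
`|μ(A) − ν(A)|`. -/
theorem gaussian_total_variation (a b σ : ℝ) (hσ : 0 < σ) :
    (⨆ A : {A : Set ℝ // MeasurableSet A},
        |((gaussianReal a (σ ^ 2).toNNReal) (A : Set ℝ)).toReal
          - ((gaussianReal b (σ ^ 2).toNNReal) (A : Set ℝ)).toReal|)
      = erf (|a - b| / (2 * Real.sqrt 2 * σ)) := by
  have hv : (σ ^ 2).toNNReal ≠ 0 := by simpa using hσ.ne'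
  have hsd : √(2 * ((σ ^ 2).toNNReal : ℝ)) = √2 * σ := by
    rw [Real.coe_toNNReal _ (by positivity), sqrt_mul zero_le_two, sqrt_sq hσ.le]
  wlog hba : b ≤ a generalizing a b
  · simpa only [abs_sub_comm] using this b a (le_of_not_ge hba)
  rw [abs_of_nonneg (sub_nonneg.2 hba), mul_assoc, ← hsd]
  exact iSup_abs_gaussianReal_sub_of_le hv hba
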